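/- For the 5-ladder graph L₅, one has OCN(L₅) ≤ 40. -/
import Mathlib


noncomputable section

/-- A rectilinear drawing of a finite simple graph `G`: an injective map of the
vertices to points of the plane `ℝ × ℝ` in general position (no three collinear);
each edge is drawn as the straight-line segment between the images of its endpoints. -/
structure OrchardDrawing {V : Type*} (G : SimpleGraph V) where
  pos : V → ℝ × ℝ
  inj : Function.Injective pos
  genPos : ∀ u v w : V, u ≠ v → u ≠ w → v ≠ w →
    ¬ Collinear ℝ ({pos u, pos v, pos w} : Set (ℝ × ℝ))

/-- The number of Orchard crossings of a drawing: the number of pairs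
`(e, e')` where `e = {s,t}` is an edge of `G` and `e' = {u,v}` is an unordered pair of
distinct vertices with `{u,v} ≠ {s,t}` such that the straight line through the images of
`u` and `v` meets the open segment joining the images of `s` and `t`.
This equals `Σ_{(s,t) ∈ E} c(s,t)`. -/
def orchardCrossings {V : Type*} {G : SimpleGraph V} (D : OrchardDrawing G) : ℕ :=
  Nat.card {q : Sym2 V × Sym2 V //
    q.1 ∈ G.edgeSet ∧ q.2 ≠ q.1 ∧ ¬ q.2.IsDiag ∧
    ∃ u v s t : V, q.2 = s(u, v) ∧ q.1 = s(s, t) ∧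
      ∃ p ∈ openSegment ℝ (D.pos s) (D.pos t),
        Collinear ℝ ({D.pos u, D.pos v, p} : Set (ℝ × ℝ))}

/-- The Orchard crossing number of a finite simple graph: the minimum of the number of
Orchard crossings over all rectilinear drawings. -/
def OCN {V : Type*} [Fintype V] (G : SimpleGraph V) : ℕ :=
  sInf {m : ℕ | ∃ D : OrchardDrawing G, orchardCrossings D = m}

/-- The `n`-ladder graph: vertices `(i, k)` with `i : Fin n`, `k : Fin 2`;
edges are the two paths `(i, k)–(i+1, k)` (for `k = 0, 1` and `i = 0, …, n-2`)
together with the rungs `(i, 0)–(i, 1)`. -/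
def ladderGraph (n : ℕ) : SimpleGraph (Fin n × Fin 2) :=
  SimpleGraph.fromRel (fun u v =>
    (u.2 = v.2 ∧ (u.1 : ℕ) + 1 = (v.1 : ℕ)) ∨ (u.1 = v.1 ∧ u.2 = 0 ∧ v.2 = 1))

namespace OCNAux

abbrev Vl := Fin 5 × Fin 2

def ptsZ : Vl → ℤ × ℤ := fun v =>
  ![![((24:ℤ),(10:ℤ)), (20,15)], ![(25,6), (15,15)], ![(13,-3), (3,13)],
    ![(8,-6), (-8,3)], ![(-9,-12), (-16,-9)]] v.1 v.2

def detZ (a b c : ℤ × ℤ) : ℤ := (b.1-a.1)*(c.2-a.2)-(b.2-a.2)*(c.1-a.1)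

def detR (a b c : ℝ × ℝ) : ℝ := (b.1-a.1)*(c.2-a.2)-(b.2-a.2)*(c.1-a.1)

def posR : Vl → ℝ × ℝ := fun v => (((ptsZ v).1 : ℝ), ((ptsZ v).2 : ℝ))

lemma detR_cast (u v w : Vl) :
    detR (posR u) (posR v) (posR w) = (detZ (ptsZ u) (ptsZ v) (ptsZ w) : ℝ) := by
  simp [detR, detZ, posR]

lemma detZ_ne : ∀ u v w : Vl, u ≠ v → u ≠ w → v ≠ w →
    detZ (ptsZ u) (ptsZ v) (ptsZ w) ≠ 0 := by decide

lemma ptsZ_inj : ∀ a b : Vl, ptsZ a = ptsZ b → a = b := by decide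

lemma collinear_imp_detR {a b c : ℝ × ℝ}
    (h : Collinear ℝ ({a,b,c} : Set (ℝ×ℝ))) : detR a b c = 0 := by
  obtain ⟨v, hv⟩ := (collinear_iff_of_mem (Set.mem_insert a _)).1 h
  obtain ⟨rb, hb⟩ := hv b (by simp)
  obtain ⟨rc, hc⟩ := hv c (by simp)
  rw [hb, hc]
  simp [detR, Prod.smul_fst, Prod.smul_snd, Prod.fst_add, Prod.snd_add, smul_eq_mul]
  ring

lemma detR_affine (x y s t : ℝ×ℝ) (a b : ℝ) (hab : a + b = 1) :
    detR x y (a • s + b • t) = a * detR x y s + b * detR x y t := by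
  have hb : b = 1 - a := by linarith
  subst hb
  simp [detR, Prod.smul_fst, Prod.smul_snd, Prod.fst_add, Prod.snd_add, smul_eq_mul]
  ring

lemma detZ_swap (a b c : ℤ × ℤ) : detZ b a c = -detZ a b c := by
  simp [detZ]; ring

lemma detZ_self₁ (a b : ℤ × ℤ) : detZ a b a = 0 := by simp [detZ]

lemma detZ_self₂ (a b : ℤ × ℤ) : detZ a b b = 0 := by simp [detZ]; ring

def cross : Sym2 Vl → Sym2 Vl → Bool :=
  Sym2.lift₂ ⟨fun s t u v =>
      decide (detZ (ptsZ u) (ptsZ v) (ptsZ s) * detZ (ptsZ u) (ptsZ v) (ptsZ t) < 0),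
    by
      intro a₁ a₂ b₁ b₂
      constructor
      · rw [decide_eq_decide, mul_comm]
      · rw [decide_eq_decide, detZ_swap (ptsZ b₁) (ptsZ b₂) (ptsZ a₁),
          detZ_swap (ptsZ b₁) (ptsZ b₂) (ptsZ a₂), neg_mul_neg]⟩

instance : DecidableRel (ladderGraph 5).Adj := fun a b =>
  decidable_of_iff
    (a ≠ b ∧ (((a.2 = b.2 ∧ (a.1 : ℕ) + 1 = (b.1 : ℕ)) ∨ (a.1 = b.1 ∧ a.2 = 0 ∧ b.2 = 1)) ∨
      ((b.2 = a.2 ∧ (b.1 : ℕ) + 1 = (a.1 : ℕ)) ∨ (b.1 = a.1 ∧ b.2 = 0 ∧ a.2 = 1))))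
    (by rw [ladderGraph]; exact Iff.rfl)

def Qp (q : Sym2 Vl × Sym2 Vl) : Prop :=
  q.1 ∈ (ladderGraph 5).edgeSet ∧ q.2 ≠ q.1 ∧ ¬ q.2.IsDiag ∧ cross q.1 q.2 = true

instance : DecidablePred Qp := fun q => by unfold Qp; infer_instance

set_option maxRecDepth 10000 in
lemma cardQ : (Finset.univ.filter Qp).card = 40 := by decide

def D5 : OrchardDrawing (ladderGraph 5) where
  pos := posR
  inj := by
    intro a b h
    apply ptsZ_inj
    simp only [posR, Prod.ext_iff] at h
    exact Prod.ext (by exact_mod_cast h.1) (by exact_mod_cast h.2)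
  genPos := by
    intro u v w h1 h2 h3 hc
    refine detZ_ne u v w h1 h2 h3 ?_
    have h0 := collinear_imp_detR hc
    rw [detR_cast] at h0
    exact_mod_cast h0

lemma P_imp_Q (q : Sym2 Vl × Sym2 Vl)
    (h : q.1 ∈ (ladderGraph 5).edgeSet ∧ q.2 ≠ q.1 ∧ ¬ q.2.IsDiag ∧
      ∃ u v s t : Vl, q.2 = s(u, v) ∧ q.1 = s(s, t) ∧
        ∃ p ∈ openSegment ℝ (posR s) (posR t),
          Collinear ℝ ({posR u, posR v, p} : Set (ℝ × ℝ))) : Qp q := by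
  obtain ⟨he, hne, hdiag, u, v, s, t, h2, h1, p, hp, hcol⟩ := h
  refine ⟨he, hne, hdiag, ?_⟩
  have huv : u ≠ v := by
    rw [h2] at hdiag; simpa using hdiag
  have hst : s ≠ t := by
    rw [h1] at he
    exact (ladderGraph 5).ne_of_adj ((SimpleGraph.mem_edgeSet (ladderGraph 5)).1 he)
  obtain ⟨a, b, ha, hb, hab, hpe⟩ := hp
  have hz : detR (posR u) (posR v) p = 0 := collinear_imp_detR hcol
  rw [← hpe, detR_affine _ _ _ _ a b hab, detR_cast, detR_cast] at hz
  rw [h1, h2]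
  simp only [cross, Sym2.lift₂_mk, decide_eq_true_eq]
  by_cases hs : s = u ∨ s = v
  · by_cases ht : t = u ∨ t = v
    · exfalso
      apply hne
      rw [h1, h2]
      rcases hs with rfl | rfl <;> rcases ht with rfl | rfl
      · exact absurd rfl hst
      · rfl
      · exact Sym2.eq_swap
      · exact absurd rfl hst
    · push_neg at ht
      exfalso
      have hB : detZ (ptsZ u) (ptsZ v) (ptsZ t) ≠ 0 :=
        detZ_ne u v t huv (Ne.symm ht.1) (Ne.symm ht.2)
      have hA : detZ (ptsZ u) (ptsZ v) (ptsZ s) = 0 := by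
        rcases hs with rfl | rfl
        · exact detZ_self₁ _ _
        · exact detZ_self₂ _ _
      rw [hA] at hz
      push_cast at hz
      have : (detZ (ptsZ u) (ptsZ v) (ptsZ t) : ℝ) = 0 := by
        rcases mul_eq_zero.1 (by linarith : b * (detZ (ptsZ u) (ptsZ v) (ptsZ t) : ℝ) = 0) with h' | h'
        · exact absurd h' (ne_of_gt hb)
        · exact h'
      exact hB (by exact_mod_cast this)
  · push_neg at hs
    have hA : detZ (ptsZ u) (ptsZ v) (ptsZ s) ≠ 0 :=
      detZ_ne u v s huv (Ne.symm hs.1) (Ne.symm hs.2)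
    by_cases ht : t = u ∨ t = v
    · exfalso
      have hB : detZ (ptsZ u) (ptsZ v) (ptsZ t) = 0 := by
        rcases ht with rfl | rfl
        · exact detZ_self₁ _ _
        · exact detZ_self₂ _ _
      rw [hB] at hz
      push_cast at hz
      have : (detZ (ptsZ u) (ptsZ v) (ptsZ s) : ℝ) = 0 := by
        rcases mul_eq_zero.1 (by linarith : a * (detZ (ptsZ u) (ptsZ v) (ptsZ s) : ℝ) = 0) with h' | h'
        · exact absurd h' (ne_of_gt ha)
        · exact h'
      exact hA (by exact_mod_cast this)
    · push_neg at ht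
      have hB : detZ (ptsZ u) (ptsZ v) (ptsZ t) ≠ 0 :=
        detZ_ne u v t huv (Ne.symm ht.1) (Ne.symm ht.2)
      set A : ℝ := (detZ (ptsZ u) (ptsZ v) (ptsZ s) : ℝ) with hAdef
      set B : ℝ := (detZ (ptsZ u) (ptsZ v) (ptsZ t) : ℝ) with hBdef
      have key : A * B < 0 := by
        rcases lt_trichotomy A 0 with hA' | hA' | hA'
        · have h2' : 0 < b * B := by nlinarith
          rcases mul_pos_iff.1 h2' with ⟨_, hBpos⟩ | ⟨hbneg, _⟩
          · exact mul_neg_of_neg_of_pos hA' hBpos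
          · exact absurd hb (not_lt.2 (le_of_lt hbneg))
        · exact absurd (show detZ (ptsZ u) (ptsZ v) (ptsZ s) = 0 by
              have h0 : (detZ (ptsZ u) (ptsZ v) (ptsZ s) : ℝ) = 0 := by rw [← hAdef]; exact hA'
              exact_mod_cast h0) hA
        · have h2' : b * B < 0 := by nlinarith
          rcases mul_neg_iff.1 h2' with ⟨_, hBneg⟩ | ⟨hbneg, _⟩
          · exact mul_neg_of_pos_of_neg hA' hBneg
          · exact absurd hb (not_lt.2 (le_of_lt hbneg))
      rw [hAdef, hBdef] at key
      exact_mod_cast key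

end OCNAux

open OCNAux in
theorem OCN_ladder_five : OCN (ladderGraph 5) ≤ 40 := by
  refine le_trans (Nat.sInf_le ⟨D5, rfl⟩) ?_
  unfold orchardCrossings
  have h1 : Nat.card {q : Sym2 Vl × Sym2 Vl // Qp q} = 40 := by
    rw [Nat.card_eq_fintype_card, Fintype.card_subtype]
    exact cardQ
  refine le_trans (Nat.card_le_card_of_injective
    (fun x => ⟨x.1, P_imp_Q x.1 x.2⟩) ?_) (le_of_eq h1)
  intro x y hxy
  exact Subtype.ext (Subtype.mk_eq_mk.1 hxy)
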